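/- arXiv:2106.03935 — 5 statements merged into one kernel-verified Lean document; each statement's English description precedes it below -/
import Mathlib

section
/- For $1 < \alpha < e^{1/e}$, there exists a unique $\omega \in (1, e)$ such that $\alpha^\omega = \omega$, i.e. $\alpha = \omega^{1/\omega}$. -/
/-! Taking logarithms, `α ^ ω = ω` becomes `log ω / ω = log α`. The function `x ↦ log x / x` is
continuous and strictly increasing on `(0, e]`, and maps `[1, e]` onto `[0, 1 / e]`; the hypotheses
on `α` say exactly that `log α` lies in the open interval `(0, 1 / e)`. -/

open Real Set

namespace Real

theorem log_div_self_strictMonoOn : StrictMonoOn (fun x : ℝ ↦ log x / x) (Ioc 0 (exp 1)) := by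
  intro x ⟨hx, _⟩ y ⟨hy, hye⟩ hxy
  have hlogy : log y ≤ 1 := by rwa [log_le_iff_le_exp hy]
  have hlog_quot : log x - log y < x / y - 1 := by
    rw [← log_div hx.ne' hy.ne']
    exact log_lt_sub_one_of_pos (div_pos hx hy) (div_ne_one_of_ne hxy.ne)
  rw [div_lt_div_iff₀ hx hy]
  have hscaled : y * (log x - log y) < x - y :=
    calc y * (log x - log y) < y * (x / y - 1) := mul_lt_mul_of_pos_left hlog_quot hy
      _ = x - y := by field_simp
  -- `x - y < 0` and `log y - 1 ≤ 0`, so `x - y ≤ (x - y) * log y`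
  nlinarith

theorem continuousOn_log_div_self : ContinuousOn (fun x : ℝ ↦ log x / x) {0}ᶜ :=
  continuousOn_log.div continuousOn_id fun _ hx ↦ hx

theorem rpow_eq_self_iff {α ω : ℝ} (hα : 0 < α) (hω : 0 < ω) :
    α ^ ω = ω ↔ log ω / ω = log α := by
  rw [← log_injOn_pos.eq_iff (rpow_pos_of_pos hα ω) hω, log_rpow hα, div_eq_iff hω.ne', mul_comm,
    eq_comm]

end Real

theorem fixed_point_exists_unique (α : ℝ) (h1 : 1 < α) (h2 : α < Real.exp (1 / Real.exp 1)) :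
    ∃! ω : ℝ, ω ∈ Set.Ioo 1 (Real.exp 1) ∧ α ^ ω = ω := by
  have hα : 0 < α := zero_lt_one.trans h1
  have he : 1 < exp 1 := one_lt_exp_iff.mpr one_pos
  have hIcc : Icc 1 (exp 1) ⊆ Ioc 0 (exp 1) := Icc_subset_Ioc_iff he.le |>.mpr ⟨zero_lt_one, le_rfl⟩
  have hlogα : log α ∈ Ioo (log 1 / 1) (log (exp 1) / exp 1) := by
    rw [log_one, zero_div, log_exp]
    exact ⟨log_pos h1, by simpa using log_lt_log hα h2⟩
  have hcont := continuousOn_log_div_self.mono fun x (hx : x ∈ Icc 1 (exp 1)) ↦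
    (zero_lt_one.trans_le hx.1).ne'
  obtain ⟨ω, hω, hωα⟩ := intermediate_value_Ioo he.le hcont hlogα
  refine ⟨ω, ⟨hω, (rpow_eq_self_iff hα (zero_lt_one.trans hω.1)).mpr hωα⟩, ?_⟩
  rintro y ⟨hy, hyα⟩
  rw [rpow_eq_self_iff hα (zero_lt_one.trans hy.1)] at hyα
  exact log_div_self_strictMonoOn.injOn (hIcc (Ioo_subset_Icc_self hy))
    (hIcc (Ioo_subset_Icc_self hω)) (hyα.trans hωα.symm)
end

section
/- For $1 < \alpha < e^{1/e}$, the sequence of iterated exponentials $a_0 = 1$, $a_{n+1} = \alpha^{a_n}$ is strictly increasing and converges to the fixed point $\omega \in (1,e)$ where $\alpha^\omega = \omega$. -/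
/-!
The map `f x = α ^ x` is increasing and continuous, and `1 < f 1`, so the orbit of `1` is
increasing. Since `log α < 1 / e` we have `f e < e`, so `f` maps `(-∞, e]` into itself and the
orbit is bounded by `e`; its limit `ω` is a fixed point of `f` by continuity, and
`ω = f ω ≤ f e < e`.
-/

open Real Filter Topology Function Set

theorem exists_isFixedPt_tendsto_iterate {X : Type*} [ConditionallyCompleteLinearOrder X]
    [TopologicalSpace X] [OrderTopology X] {f : X → X} (hf : Monotone f) (hcont : Continuous f)
    {x c : X} (hx : x ≤ f x) (hxc : x ≤ c) (hmaps : MapsTo f (Iic c) (Iic c)) :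
    ∃ ω, IsFixedPt f ω ∧ ω ≤ c ∧ Tendsto (fun n => f^[n] x) atTop (𝓝 ω) := by
  have hbound : ∀ n, f^[n] x ≤ c := fun n => hmaps.iterate n hxc
  have hlim := tendsto_atTop_ciSup (hf.monotone_iterate_of_le_map hx)
    ⟨c, forall_mem_range.2 hbound⟩
  exact ⟨_, isFixedPt_of_tendsto_iterate hlim hcont.continuousAt,
    le_of_tendsto' hlim hbound, hlim⟩

theorem rpow_exp_one_lt_exp_one {α : ℝ} (hα : 0 < α) (h : α < exp (1 / exp 1)) :
    α ^ exp 1 < exp 1 := by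
  have hlog : log α < 1 / exp 1 := by simpa only [log_exp] using log_lt_log hα h
  rw [rpow_def_of_pos hα, exp_lt_exp]
  exact (lt_div_iff₀ (exp_pos 1)).1 hlog

theorem power_tower_converges (α : ℝ) (h1 : 1 < α) (h2 : α < Real.exp (1 / Real.exp 1))
    (a : ℕ → ℝ) (ha0 : a 0 = 1) (ha : ∀ n, a (n + 1) = α ^ a n) :
    StrictMono a ∧ ∃ ω : ℝ, ω ∈ Set.Ioo 1 (Real.exp 1) ∧ α ^ ω = ω ∧
      Filter.Tendsto a Filter.atTop (nhds ω) := by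
  have hα : 0 < α := zero_lt_one.trans h1
  set f : ℝ → ℝ := fun x => α ^ x
  have hf : StrictMono f := fun _ _ h => rpow_lt_rpow_of_exponent_lt h1 h
  have ha_iterate : a = fun n => f^[n] 1 := by
    funext n
    induction n with
    | zero => exact ha0
    | succ n ih => rw [ha, ih, iterate_succ_apply']
  have hf1 : 1 < f 1 := by simpa only [f, rpow_one] using h1
  have hfe : f (exp 1) < exp 1 := rpow_exp_one_lt_exp_one hα h2
  have hmaps : MapsTo f (Iic (exp 1)) (Iic (exp 1)) := fun _ hx => (hf.monotone hx).trans hfe.le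
  obtain ⟨ω, hfix, hωe, hlim⟩ := exists_isFixedPt_tendsto_iterate hf.monotone
    (continuous_const_rpow hα.ne') hf1.le (one_le_exp zero_le_one) hmaps
  have hmono := hf.strictMono_iterate_of_lt_map hf1
  subst ha_iterate
  refine ⟨hmono, ω, ⟨?_, ?_⟩, hfix, hlim⟩
  · exact hf1.trans_le (hmono.monotone.ge_of_tendsto hlim 1)
  · calc ω = f ω := hfix.symm
      _ ≤ f (exp 1) := hf.monotone hωe
      _ < exp 1 := hfe
end

section
/- Let $f : \mathbb{C} \to \mathbb{C}$ be entire with $\int_0^\infty |f(x - t)| \, dt < \infty$ locally uniformly in $x$, and suppose $\int_0^\infty |f(x-t)| t^{\sigma-1} dt < \infty$ for all $0 < \sigma < 1$. Then for $0 < \Re(z) < 1$, $\Gamma(z) \cdot \frac{1}{\Gamma(z)}\int_0^\infty f(x-t)t^{z-1}dt = \sum_{n=0}^\infty f^{(n)}(x)\frac{(-1)^n}{n!(n+z)} + \int_1^\infty f(x-t)t^{z-1}dt$, and the right-hand side defines a holomorphic function of $z$ on $\{\Re(z) < 1\} \setminus \{0,-1,-2,\dots\}$. -/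
/-!
Split the integral over `(0, ∞)` at `t = 1`. On `(0, 1]`, expand `f (x - t)` in its Taylor series
at `x`, which converges absolutely for every `t` because `f` is entire, and integrate term by term
using `∫₀¹ tⁿ t^(z-1) dt = 1 / (n + z)`. The resulting series `∑ aₙ / (n + z)` converges locally
uniformly away from `0, -1, -2, …`, hence is holomorphic there. For `Re z < 1` the tail
`∫₁^∞ f (x - t) t^(z-1) dt` may be differentiated under the integral sign, since `t^(z-1) log t`
is bounded on `t ≥ 1` locally uniformly in `z` and `f (x - ·)` is integrable.
-/

open MeasureTheory Set Filter Metric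

theorem Differentiable.summable_norm_iteratedDeriv_mul_pow_div_factorial {f : ℂ → ℂ}
    (hf : Differentiable ℂ f) (x w : ℂ) :
    Summable fun n => ‖iteratedDeriv n f x * w ^ n / n.factorial‖ := by
  set p := FormalMultilinearSeries.ofScalars ℂ fun n => iteratedDeriv n f x / n.factorial
  have hp : p = cauchyPowerSeries f x 1 :=
    (hf.analyticAt x).hasFPowerSeriesAt.eq_formalMultilinearSeries
      (hf.hasFPowerSeriesOnBall x one_pos).hasFPowerSeriesAt
  have hrad : p.radius = ⊤ := top_le_iff.1 (hp ▸ (hf.hasFPowerSeriesOnBall x one_pos).r_le)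
  simpa [p, FormalMultilinearSeries.ofScalars_norm, mul_div_right_comm] using
    p.summable_norm_mul_pow (r := ‖w‖₊) (hrad ▸ ENNReal.coe_lt_top)

theorem integral_zero_one_cpow_sub_one {w : ℂ} (hw : 0 < w.re) :
    ∫ t in (0 : ℝ)..1, (t : ℂ) ^ (w - 1) = 1 / w := by
  rw [integral_cpow (Or.inl (by simpa using hw)), sub_add_cancel, Complex.ofReal_one,
    Complex.one_cpow, Complex.ofReal_zero, Complex.zero_cpow (by rintro rfl; simp at hw), sub_zero]

theorem integral_zero_one_tsum_mul_cpow {a : ℕ → ℂ} (ha : Summable fun n => ‖a n‖) {z : ℂ}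
    (hz : 0 < z.re) :
    ∫ t in (0 : ℝ)..1, (∑' n, a n * (t : ℂ) ^ n) * (t : ℂ) ^ (z - 1) = ∑' n, a n / (n + z) := by
  set G : ℕ → ℝ → ℂ := fun n t => a n * (t : ℂ) ^ n * (t : ℂ) ^ (z - 1)
  have hcpow : IntegrableOn (fun t : ℝ => (t : ℂ) ^ (z - 1)) (Ioc 0 1) :=
    (intervalIntegrable_iff_integrableOn_Ioc_of_le zero_le_one).1
      (intervalIntegral.intervalIntegrable_cpow' (by simpa using hz))
  have hG_le : ∀ n, ∀ᵐ t ∂(volume.restrict (Ioc (0 : ℝ) 1)),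
      ‖G n t‖ ≤ ‖a n‖ * ‖(t : ℂ) ^ (z - 1)‖ := by
    intro n
    filter_upwards [ae_restrict_mem measurableSet_Ioc] with t ht
    rw [norm_mul, norm_mul, norm_pow, Complex.norm_real, Real.norm_of_nonneg ht.1.le]
    gcongr
    exact mul_le_of_le_one_right (norm_nonneg _) (pow_le_one₀ ht.1.le ht.2)
  have hG_int : ∀ n, IntegrableOn (G n) (Ioc 0 1) := fun n =>
    (hcpow.norm.const_mul _).mono' (by fun_prop) (hG_le n)
  have hG_sum : Summable fun n => ∫ t in Ioc (0 : ℝ) 1, ‖G n t‖ :=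
    (ha.mul_right (∫ t in Ioc (0 : ℝ) 1, ‖(t : ℂ) ^ (z - 1)‖)).of_nonneg_of_le
      (fun n => integral_nonneg fun _ => norm_nonneg _)
      (fun n => (integral_mono_ae (hG_int n).norm (hcpow.norm.const_mul _) (hG_le n)).trans_eq
        (integral_const_mul _ _))
  have hG_integral : ∀ n, ∫ t in Ioc (0 : ℝ) 1, G n t = a n / (n + z) := by
    intro n
    have hnz : 0 < ((n : ℂ) + z).re := by simpa using add_pos_of_nonneg_of_pos n.cast_nonneg hz
    rw [div_eq_mul_one_div, ← integral_zero_one_cpow_sub_one hnz,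
      intervalIntegral.integral_of_le zero_le_one, ← integral_const_mul]
    refine setIntegral_congr_fun measurableSet_Ioc fun t ht => ?_
    have ht0 : (t : ℂ) ≠ 0 := Complex.ofReal_ne_zero.2 ht.1.ne'
    simp only [G, mul_assoc, ← Complex.cpow_natCast, ← Complex.cpow_add _ _ ht0]
    ring_nf
  calc _ = ∫ t in Ioc (0 : ℝ) 1, ∑' n, G n t := by
        simp only [intervalIntegral.integral_of_le zero_le_one, G, tsum_mul_right]
    _ = ∑' n, ∫ t in Ioc (0 : ℝ) 1, G n t :=
        (integral_tsum_of_summable_integral_norm hG_int hG_sum).symm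
    _ = ∑' n, a n / (n + z) := tsum_congr hG_integral

theorem Differentiable.integral_zero_one_mul_cpow_eq_tsum {f : ℂ → ℂ} (hf : Differentiable ℂ f)
    (x : ℂ) {z : ℂ} (hz : 0 < z.re) :
    ∫ t in (0 : ℝ)..1, f (x - t) * (t : ℂ) ^ (z - 1) =
      ∑' n : ℕ, iteratedDeriv n f x * (-1 : ℂ) ^ n / (n.factorial * (n + z)) := by
  have htaylor : ∀ t : ℝ, f (x - t) =
      ∑' n : ℕ, iteratedDeriv n f x * (-1) ^ n / n.factorial * (t : ℂ) ^ n := fun t => by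
    rw [← Complex.taylorSeries_eq_of_entire' x (x - t) hf]
    refine tsum_congr fun n => ?_
    rw [sub_sub_cancel_left, neg_pow]
    ring
  simp_rw [htaylor, integral_zero_one_tsum_mul_cpow
    (hf.summable_norm_iteratedDeriv_mul_pow_div_factorial x (-1)) hz, div_div]

theorem isClosed_range_neg_natCast : IsClosed (range fun n : ℕ => -(n : ℂ)) := by
  refine (isClosedEmbedding_of_pairwise_le_dist zero_lt_one fun m n hmn => ?_).isClosed_range
  change 1 ≤ dist (-(m : ℂ)) (-(n : ℂ))
  rw [dist_neg_neg, ← Complex.ofReal_natCast, ← Complex.ofReal_natCast,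
    Complex.isometry_ofReal.dist_eq]
  exact Nat.pairwise_one_le_dist hmn

theorem differentiableOn_tsum_div_natCast_add {a : ℕ → ℂ} (ha : Summable fun n => ‖a n‖) :
    DifferentiableOn ℂ (fun z => ∑' n : ℕ, a n / (n + z)) {z | ∀ n : ℕ, z ≠ -n} := by
  intro z₀ hz₀
  set T := range fun n : ℕ => -(n : ℂ)
  set δ := infDist z₀ T
  have hδ : 0 < δ := (isClosed_range_neg_natCast.notMem_iff_infDist_pos ⟨0, 0, by simp⟩).1
    (by rintro ⟨n, hn⟩; exact hz₀ n hn.symm)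
  have hfar : ∀ z ∈ ball z₀ (δ / 2), ∀ n : ℕ, δ / 2 ≤ ‖(n : ℂ) + z‖ := by
    intro z hz n
    calc δ / 2 ≤ δ - dist z₀ z := by linarith [mem_ball'.1 hz]
      _ ≤ infDist z T := by linarith [infDist_le_infDist_add_dist (x := z₀) (y := z) (s := T)]
      _ ≤ dist z (-n) := infDist_le_dist_of_mem ⟨n, rfl⟩
      _ = ‖(n : ℂ) + z‖ := by rw [dist_eq_norm, sub_neg_eq_add, add_comm]
  have hne : ∀ z ∈ ball z₀ (δ / 2), ∀ n : ℕ, (n : ℂ) + z ≠ 0 := fun z hz n =>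
    norm_pos_iff.1 ((half_pos hδ).trans_le (hfar z hz n))
  refine (Complex.differentiableOn_tsum_of_summable_norm (ha.mul_right (δ / 2)⁻¹)
    (fun n z hz => ?_) isOpen_ball (fun n z hz => ?_)).differentiableAt
    (ball_mem_nhds z₀ (half_pos hδ)) |>.differentiableWithinAt
  · exact ((differentiableAt_const _).div (differentiableAt_id.const_add _)
      (hne z hz n)).differentiableWithinAt
  · rw [norm_div, div_eq_mul_inv]
    gcongr
    exact hfar z hz n

theorem norm_ofReal_cpow_mul_log_le {t : ℝ} (ht : 1 ≤ t) {w : ℂ} {ε : ℝ} (hε : 0 < ε)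
    (hw : w.re ≤ -ε) : ‖(t : ℂ) ^ w * Complex.log t‖ ≤ 1 / ε := by
  have ht0 : 0 < t := one_pos.trans_le ht
  rw [norm_mul, Complex.norm_cpow_eq_rpow_re_of_pos ht0, ← Complex.ofReal_log ht0.le,
    Complex.norm_real, Real.norm_of_nonneg (Real.log_nonneg ht)]
  calc t ^ w.re * Real.log t ≤ t ^ (-ε) * (t ^ ε / ε) :=
        mul_le_mul (Real.rpow_le_rpow_of_exponent_le ht hw)
          (Real.log_le_rpow_div ht0.le hε) (Real.log_nonneg ht) (by positivity)
    _ = 1 / ε := by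
        rw [mul_div_assoc', ← Real.rpow_add ht0, neg_add_cancel, Real.rpow_zero]

theorem differentiableOn_integral_Ioi_one_mul_cpow {g : ℝ → ℂ} (hg : IntegrableOn g (Ioi 1)) :
    DifferentiableOn ℂ (fun z : ℂ => ∫ t in Ioi (1 : ℝ), g t * (t : ℂ) ^ (z - 1))
      {z : ℂ | z.re < 1} := by
  intro z₀ hz₀
  set ε := (1 - z₀.re) / 2 with hε_def
  have hε : 0 < ε := half_pos (sub_pos.2 hz₀)
  have hre : ∀ z ∈ ball z₀ ε, (z - 1).re ≤ -ε := fun z hz => by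
    have := (Complex.abs_re_le_norm (z - z₀)).trans (mem_ball_iff_norm.1 hz).le
    simp only [Complex.sub_re, Complex.one_re] at this ⊢
    linarith [(abs_le.1 this).2, hε_def]
  have hmeas : ∀ z : ℂ, AEStronglyMeasurable (fun t : ℝ => g t * (t : ℂ) ^ (z - 1))
      (volume.restrict (Ioi 1)) := fun z =>
    hg.aestronglyMeasurable.mul (by fun_prop : Measurable _).aestronglyMeasurable
  have hint : IntegrableOn (fun t : ℝ => g t * (t : ℂ) ^ (z₀ - 1)) (Ioi 1) := by
    refine hg.norm.mono' (hmeas z₀) ?_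
    filter_upwards [ae_restrict_mem measurableSet_Ioi] with t ht
    rw [norm_mul, Complex.norm_cpow_eq_rpow_re_of_pos (one_pos.trans ht)]
    exact mul_le_of_le_one_right (norm_nonneg _)
      (Real.rpow_le_one_of_one_le_of_nonpos ht.le (by linarith [hre z₀ (mem_ball_self hε)]))
  have hderiv := hasDerivAt_integral_of_dominated_loc_of_deriv_le (ball_mem_nhds z₀ hε)
    (F' := fun z t => g t * ((t : ℂ) ^ (z - 1) * Complex.log t))
    (bound := fun t => ‖g t‖ * (1 / ε))
    (Eventually.of_forall hmeas) hint
    (hg.aestronglyMeasurable.mul (by fun_prop)) ?_ (hg.norm.mul_const _) ?_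
  · exact hderiv.2.differentiableAt.differentiableWithinAt
  · filter_upwards [ae_restrict_mem measurableSet_Ioi] with t ht z hz
    rw [norm_mul]
    gcongr
    exact norm_ofReal_cpow_mul_log_le ht.le hε (hre z hz)
  · filter_upwards [ae_restrict_mem measurableSet_Ioi] with t ht z _
    have ht0 : (t : ℂ) ≠ 0 := Complex.ofReal_ne_zero.2 (one_pos.trans ht).ne'
    simpa using ((Complex.hasStrictDerivAt_const_cpow (Or.inl ht0)).hasDerivAt.comp z
      ((hasDerivAt_id z).sub_const 1)).const_mul (g t)

theorem euler_analytic_continuation (f : ℂ → ℂ) (hf : Differentiable ℂ f) (x : ℂ)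
    (hint : Integrable (fun t : ℝ => ‖f (x - t)‖) (volume.restrict (Set.Ioi 0)))
    (hint' : ∀ σ : ℝ, 0 < σ → σ < 1 →
      Integrable (fun t : ℝ => ‖f (x - t)‖ * t ^ (σ - 1)) (volume.restrict (Set.Ioi 0))) :
    (∀ z : ℂ, 0 < z.re → z.re < 1 →
      ∫ t in Set.Ioi (0 : ℝ), f (x - t) * (t : ℂ) ^ (z - 1) =
        (∑' n : ℕ, iteratedDeriv n f x * (-1 : ℂ) ^ n / (n.factorial * (n + z))) +
          ∫ t in Set.Ioi (1 : ℝ), f (x - t) * (t : ℂ) ^ (z - 1)) ∧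
    DifferentiableOn ℂ
      (fun z : ℂ => (∑' n : ℕ, iteratedDeriv n f x * (-1 : ℂ) ^ n / (n.factorial * (n + z))) +
        ∫ t in Set.Ioi (1 : ℝ), f (x - t) * (t : ℂ) ^ (z - 1))
      {z : ℂ | z.re < 1 ∧ ∀ n : ℕ, z ≠ -n} := by
  have hf_cont := hf.continuous
  refine ⟨fun z hz0 hz1 => ?_, ?_⟩
  · have hint_z : IntegrableOn (fun t : ℝ => f (x - t) * (t : ℂ) ^ (z - 1)) (Ioi 0) := by
      refine (integrable_norm_iff (by fun_prop : Measurable _).aestronglyMeasurable).1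
        ((hint' z.re hz0 hz1).congr ?_)
      filter_upwards [ae_restrict_mem measurableSet_Ioi] with t ht
      rw [norm_mul, Complex.norm_cpow_eq_rpow_re_of_pos ht, Complex.sub_re, Complex.one_re]
    rw [← intervalIntegral.integral_interval_add_Ioi hint_z
      (hint_z.mono_set (Ioi_subset_Ioi zero_le_one)), hf.integral_zero_one_mul_cpow_eq_tsum x hz0]
  · have hg : IntegrableOn (fun t : ℝ => f (x - t)) (Ioi 1) :=
      IntegrableOn.mono_set ((integrable_norm_iff (by fun_prop)).1 hint)
        (Ioi_subset_Ioi zero_le_one)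
    have hseries := differentiableOn_tsum_div_natCast_add
      (hf.summable_norm_iteratedDeriv_mul_pow_div_factorial x (-1))
    simp only [div_div] at hseries
    exact (hseries.mono fun z hz => hz.2).add
      ((differentiableOn_integral_Ioi_one_mul_cpow hg).mono fun z hz => hz.1)
end

section
/- Let $F$ be holomorphic and bounded on the right half-plane $\{\Re(z) > 0\}$, continuous on the closure. If $F(z_0 + n) = 0$ for some $z_0$ with $\Re(z_0) > 0$ and all natural numbers $n$, and $|F(z)| \le C e^{-\pi |\Im(z)|/2} \cdot |\Gamma(-z)|^{-1}$-type decay holds so that $\Gamma(-z)F(z)$ is bounded by $C_\delta e^{(\delta - \pi/2)|\Im z|}$ for every $\delta > 0$, then $F \equiv 0$. -/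
/-!
Dividing a bounded holomorphic function on the right half-plane by the Blaschke factor
`(z - a) / (z + conj a)` of one of its zeros does not increase its sup norm: the factor has
modulus one on the imaginary axis, so the Phragmén–Lindelöf principle applies. Dividing out the
zeros `z₀ + n` one at a time gives `|F w| ≤ M ∏ |w - aₙ| / |w + conj aₙ|`, and the product tends
to zero because `∑ Re aₙ / |w + conj aₙ|² ≍ ∑ 1 / n` diverges (the Blaschke condition fails).
-/

open Complex ComplexConjugate Filter Finset Topology

lemma norm_sub_sq_add_four_mul_re_mul_re (w a : ℂ) :
    ‖w - a‖ ^ 2 + 4 * w.re * a.re = ‖w + conj a‖ ^ 2 := by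
  simp only [Complex.sq_norm, normSq_apply, sub_re, sub_im, add_re, add_im, conj_re, conj_im]
  ring

lemma norm_sub_div_norm_add_conj_le_exp (w a : ℂ) :
    ‖w - a‖ / ‖w + conj a‖ ≤ Real.exp (-(2 * w.re * a.re / ‖w + conj a‖ ^ 2)) := by
  set D := ‖w + conj a‖
  rcases eq_or_ne D 0 with hD | hD
  · simp only [hD, div_zero]
    positivity
  rw [show 2 * w.re * a.re / D ^ 2 = 4 * w.re * a.re / D ^ 2 / 2 by ring, ← neg_div,
    Real.exp_half, ← Real.sqrt_sq (by positivity : 0 ≤ ‖w - a‖ / D)]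
  refine Real.sqrt_le_sqrt ?_
  calc (‖w - a‖ / D) ^ 2 = 1 - 4 * w.re * a.re / D ^ 2 := by
        rw [div_pow, eq_sub_iff_add_eq, ← add_div, norm_sub_sq_add_four_mul_re_mul_re,
          div_self (pow_ne_zero 2 hD)]
    _ ≤ Real.exp (-(4 * w.re * a.re / D ^ 2)) := by
        linarith [Real.add_one_le_exp (-(4 * w.re * a.re / D ^ 2))]

lemma tendsto_prod_norm_sub_div_norm_add_conj_zero {w : ℂ} (hw : 0 < w.re) {a : ℕ → ℂ}
    (ha : Tendsto (fun N ↦ ∑ n ∈ range N, (a n).re / ‖w + conj (a n)‖ ^ 2) atTop atTop) :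
    Tendsto (fun N ↦ ∏ n ∈ range N, ‖w - a n‖ / ‖w + conj (a n)‖) atTop (𝓝 0) := by
  refine squeeze_zero (fun N ↦ prod_nonneg fun n _ ↦ by positivity) (fun N ↦ ?_)
    (Real.tendsto_exp_atBot.comp (ha.const_mul_atTop_of_neg (by linarith : -(2 * w.re) < 0)))
  calc ∏ n ∈ range N, ‖w - a n‖ / ‖w + conj (a n)‖
      ≤ ∏ n ∈ range N, Real.exp (-(2 * w.re * (a n).re / ‖w + conj (a n)‖ ^ 2)) :=
        prod_le_prod (fun n _ ↦ by positivity) fun n _ ↦ norm_sub_div_norm_add_conj_le_exp _ _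
    _ = Real.exp (-(2 * w.re) * ∑ n ∈ range N, (a n).re / ‖w + conj (a n)‖ ^ 2) := by
        rw [← Real.exp_sum, mul_sum]
        exact congrArg Real.exp (sum_congr rfl fun n _ ↦ by ring)

lemma tendsto_sum_re_add_natCast_div_norm_add_conj_sq_atTop {w z₀ : ℂ} (hw : 0 ≤ w.re)
    (hz₀ : 0 < z₀.re) :
    Tendsto (fun N ↦ ∑ n ∈ range N, (z₀ + n).re / ‖w + conj (z₀ + n)‖ ^ 2) atTop atTop := by
  set m := min z₀.re 1
  set K := ‖w‖ + ‖z₀‖ + 1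
  have hm : 0 < m := lt_min hz₀ one_pos
  have hterm (n : ℕ) : m / K ^ 2 * (1 / ((n : ℝ) + 1)) ≤ (z₀ + n).re / ‖w + conj (z₀ + n)‖ ^ 2 := by
    have hre : m * ((n : ℝ) + 1) ≤ (z₀ + n).re := by
      rw [add_re, natCast_re]
      nlinarith [min_le_left z₀.re 1, min_le_right z₀.re 1, (n.cast_nonneg : (0 : ℝ) ≤ n)]
    have hre_pos : 0 < (z₀ + n).re := lt_of_lt_of_le (by positivity) hre
    have hpos : 0 < ‖w + conj (z₀ + n)‖ := by
      refine lt_of_lt_of_le ?_ (re_le_norm _)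
      rw [add_re, conj_re]
      linarith
    have hle : ‖w + conj (z₀ + n)‖ ≤ K * ((n : ℝ) + 1) := by
      calc ‖w + conj (z₀ + n)‖ ≤ ‖w‖ + (‖z₀‖ + n) := by
            grw [norm_add_le, norm_conj, norm_add_le, Complex.norm_natCast]
        _ ≤ K * ((n : ℝ) + 1) := by
            nlinarith [norm_nonneg w, norm_nonneg z₀, (n.cast_nonneg : (0 : ℝ) ≤ n)]
    calc m / K ^ 2 * (1 / ((n : ℝ) + 1)) = m * ((n : ℝ) + 1) / (K * ((n : ℝ) + 1)) ^ 2 := by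
          field_simp
      _ ≤ (z₀ + n).re / ‖w + conj (z₀ + n)‖ ^ 2 := by gcongr
  refine tendsto_atTop_mono (fun N ↦ sum_le_sum fun n _ ↦ hterm n) ?_
  simp only [← mul_sum]
  exact Real.tendsto_sum_range_one_div_nat_succ_atTop.const_mul_atTop (by positivity)

lemma norm_le_of_norm_le_on_imaginary_axis {E : Type*} [NormedAddCommGroup E] [NormedSpace ℂ E]
    {f : ℂ → E} {B C R : ℝ} (hd : DiffContOnCl ℂ f {z : ℂ | 0 < z.re})
    (hfar : ∀ z : ℂ, 0 ≤ z.re → R ≤ ‖z‖ → ‖f z‖ ≤ B) (him : ∀ y : ℝ, ‖f (y * I)‖ ≤ C)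
    {z : ℂ} (hz : 0 ≤ z.re) : ‖f z‖ ≤ C := by
  refine PhragmenLindelof.right_half_plane_of_bounded_on_real hd ⟨1, one_lt_two, 0, ?_⟩ ?_ him hz
  · refine Asymptotics.IsBigO.of_bound B ?_
    rw [eventually_inf_principal]
    filter_upwards [tendsto_norm_cobounded_atTop.eventually_ge_atTop R] with w hw hre
    simpa using hfar w (le_of_lt hre) hw
  · refine isBoundedUnder_of_eventually_le (a := B) ?_
    filter_upwards [eventually_ge_atTop (max R 0)] with x hx
    have hx0 : 0 ≤ x := le_of_max_le_right hx
    refine hfar x (by simpa using hx0) ?_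
    rw [norm_real, Real.norm_of_nonneg hx0]
    exact le_of_max_le_left hx

lemma diffContOnCl_dslope {E : Type*} [NormedAddCommGroup E] [NormedSpace ℂ E] [CompleteSpace E]
    {f : ℂ → E} {s : Set ℂ} {a : ℂ} (hf : DiffContOnCl ℂ f s) (hs : IsOpen s) (ha : a ∈ s) :
    DiffContOnCl ℂ (dslope f a) s := by
  have hd : DifferentiableOn ℂ (dslope f a) s :=
    (differentiableOn_dslope (hs.mem_nhds ha)).2 hf.differentiableOn
  refine ⟨hd, fun z hz ↦ ?_⟩
  rcases eq_or_ne z a with rfl | hne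
  · exact (hd.differentiableAt (hs.mem_nhds ha)).continuousAt.continuousWithinAt
  · exact (continuousWithinAt_dslope_of_ne hne).2 (hf.continuousOn z hz)

lemma exists_mul_sub_eq_mul_add_conj {g : ℂ → ℂ} {M : ℝ} {a : ℂ}
    (hg : DiffContOnCl ℂ g {z : ℂ | 0 < z.re}) (hM : ∀ z : ℂ, 0 ≤ z.re → ‖g z‖ ≤ M)
    (ha : 0 < a.re) (hga : g a = 0) :
    ∃ h : ℂ → ℂ, DiffContOnCl ℂ h {z : ℂ | 0 < z.re} ∧ (∀ z : ℂ, 0 ≤ z.re → ‖h z‖ ≤ M) ∧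
      ∀ z, (z + conj a) * g z = h z * (z - a) := by
  have hopen : IsOpen {z : ℂ | 0 < z.re} := isOpen_lt continuous_const continuous_re
  set h : ℂ → ℂ := fun z ↦ (z + conj a) * dslope g a z
  have hd : DiffContOnCl ℂ h {z : ℂ | 0 < z.re} :=
    ((differentiable_id.add_const _).diffContOnCl).smul (diffContOnCl_dslope hg hopen ha)
  have hfac (z : ℂ) : (z + conj a) * g z = h z * (z - a) := by
    rw [mul_assoc, mul_comm (dslope g a z), ← smul_eq_mul (z - a), sub_smul_dslope, hga, sub_zero]
  have hnorm (z : ℂ) : ‖h z‖ * ‖z - a‖ = ‖z + conj a‖ * ‖g z‖ := by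
    rw [← norm_mul, ← norm_mul, hfac]
  have hM0 : 0 ≤ M := (norm_nonneg _).trans (hM 0 le_rfl)
  refine ⟨h, hd, fun z hz ↦ ?_, hfac⟩
  refine norm_le_of_norm_le_on_imaginary_axis hd (R := ‖a‖ + 2 * a.re) (B := 2 * M)
    (fun z hz hR ↦ ?_) (fun y ↦ ?_) hz
  · have hza : 2 * a.re ≤ ‖z - a‖ := by linarith [norm_sub_norm_le z a]
    have hconj : ‖z + conj a‖ ≤ ‖z - a‖ + 2 * a.re := by
      calc ‖z + conj a‖ = ‖(z - a) + (a + conj a)‖ := by ring_nf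
        _ ≤ ‖z - a‖ + 2 * a.re := by
          grw [norm_add_le, add_conj, norm_real, Real.norm_of_nonneg (by linarith)]
    refine le_of_mul_le_mul_right ?_ (by linarith : 0 < ‖z - a‖)
    rw [hnorm]
    nlinarith [hM z hz, norm_nonneg (g z)]
  · have hre : ((y : ℂ) * I).re = 0 := by simp
    have hne : 0 < ‖(y : ℂ) * I - a‖ :=
      norm_pos_iff.2 fun h0 ↦ by simpa [hre, ha.ne'] using congrArg re h0
    have hsym : ‖(y : ℂ) * I + conj a‖ = ‖(y : ℂ) * I - a‖ := by
      have := norm_sub_sq_add_four_mul_re_mul_re ((y : ℂ) * I) a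
      rw [hre, mul_zero, zero_mul, add_zero] at this
      exact ((pow_left_inj₀ (norm_nonneg _) (norm_nonneg _) two_ne_zero).1 this).symm
    have := hnorm ((y : ℂ) * I)
    rw [hsym, mul_comm ‖(y : ℂ) * I - a‖] at this
    rw [mul_right_cancel₀ hne.ne' this]
    exact hM _ hre.ge

section Factorization

variable {F : ℂ → ℂ} {M : ℝ} {a : ℕ → ℂ}

lemma exists_mul_prod_sub_eq_mul_prod_add_conj (hF : DiffContOnCl ℂ F {z : ℂ | 0 < z.re})
    (hM : ∀ z : ℂ, 0 ≤ z.re → ‖F z‖ ≤ M) (ha : Function.Injective a)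
    (hre : ∀ n, 0 < (a n).re) (hzero : ∀ n, F (a n) = 0) (N : ℕ) :
    ∃ G : ℂ → ℂ, DiffContOnCl ℂ G {z : ℂ | 0 < z.re} ∧ (∀ z : ℂ, 0 ≤ z.re → ‖G z‖ ≤ M) ∧
      (∀ m, N ≤ m → G (a m) = 0) ∧
      ∀ z, F z * ∏ n ∈ range N, (z + conj (a n)) = G z * ∏ n ∈ range N, (z - a n) := by
  induction N with
  | zero => exact ⟨F, hF, hM, fun m _ ↦ hzero m, fun z ↦ by simp⟩
  | succ N ih =>
    obtain ⟨G, hG, hGM, hGzero, hGfac⟩ := ih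
    obtain ⟨H, hH, hHM, hHfac⟩ :=
      exists_mul_sub_eq_mul_add_conj hG hGM (hre N) (hGzero N le_rfl)
    refine ⟨H, hH, hHM, fun m hm ↦ ?_, fun z ↦ ?_⟩
    · have hfac := hHfac (a m)
      rw [hGzero m (by omega), mul_zero] at hfac
      exact (mul_eq_zero.1 hfac.symm).resolve_right (sub_ne_zero.2 (ha.ne (by omega)))
    · rw [prod_range_succ, prod_range_succ]
      linear_combination (z + conj (a N)) * hGfac z + (∏ n ∈ range N, (z - a n)) * hHfac z

lemma norm_le_mul_prod_norm_sub_div_norm_add_conj (hF : DiffContOnCl ℂ F {z : ℂ | 0 < z.re})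
    (hM : ∀ z : ℂ, 0 ≤ z.re → ‖F z‖ ≤ M) (ha : Function.Injective a)
    (hre : ∀ n, 0 < (a n).re) (hzero : ∀ n, F (a n) = 0) {w : ℂ} (hw : 0 ≤ w.re) (N : ℕ) :
    ‖F w‖ ≤ M * ∏ n ∈ range N, ‖w - a n‖ / ‖w + conj (a n)‖ := by
  obtain ⟨G, -, hGM, -, hfac⟩ := exists_mul_prod_sub_eq_mul_prod_add_conj hF hM ha hre hzero N
  have hpos : 0 < ∏ n ∈ range N, ‖w + conj (a n)‖ := by
    refine prod_pos fun n _ ↦ lt_of_lt_of_le ?_ (re_le_norm _)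
    rw [add_re, conj_re]
    linarith [hre n]
  rw [prod_div_distrib, ← mul_div_assoc, le_div_iff₀ hpos]
  calc ‖F w‖ * ∏ n ∈ range N, ‖w + conj (a n)‖ = ‖G w‖ * ∏ n ∈ range N, ‖w - a n‖ := by
        simpa only [norm_mul, norm_prod] using congrArg norm (hfac w)
    _ ≤ M * ∏ n ∈ range N, ‖w - a n‖ :=
        mul_le_mul_of_nonneg_right (hGM w hw) (prod_nonneg fun n _ ↦ norm_nonneg _)

end Factorization

theorem uniqueness_from_vanishing_on_naturals_general (F : ℂ → ℂ)
    (hdiff : DifferentiableOn ℂ F {z : ℂ | 0 < z.re})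
    (hbdd : ∃ M : ℝ, ∀ z : ℂ, 0 < z.re → ‖F z‖ ≤ M)
    (hcont : ContinuousOn F {z : ℂ | 0 ≤ z.re})
    (z₀ : ℂ) (hz₀ : 0 < z₀.re) (hzero : ∀ n : ℕ, F (z₀ + n) = 0) :
    ∀ z : ℂ, 0 < z.re → F z = 0 := by
  intro w hw
  obtain ⟨M, hM⟩ := hbdd
  have hclosure := closure_setOfPred_lt_re 0
  have hF : DiffContOnCl ℂ F {z : ℂ | 0 < z.re} := ⟨hdiff, hclosure ▸ hcont⟩
  have hMcl (z : ℂ) (hz : 0 ≤ z.re) : ‖F z‖ ≤ M := by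
    have hz' : z ∈ closure {z : ℂ | 0 < z.re} := hclosure ▸ hz
    exact ((hF.continuousOn z hz').mono subset_closure).norm.closure_le hz'
      continuousWithinAt_const hM
  have hinj : Function.Injective fun n : ℕ ↦ z₀ + n := fun m n h ↦ by simpa using h
  have hre (n : ℕ) : 0 < (z₀ + n).re := by
    rw [add_re, natCast_re]
    positivity
  have hlim := (tendsto_prod_norm_sub_div_norm_add_conj_zero hw
    (tendsto_sum_re_add_natCast_div_norm_add_conj_sq_atTop hw.le hz₀)).const_mul M
  rw [mul_zero] at hlim
  exact norm_le_zero_iff.1 <| ge_of_tendsto' hlim <|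
    norm_le_mul_prod_norm_sub_div_norm_add_conj hF hMcl hinj hre hzero hw.le

theorem uniqueness_from_vanishing_on_naturals (F : ℂ → ℂ)
    (hdiff : DifferentiableOn ℂ F {z : ℂ | 0 < z.re})
    (hbdd : ∃ M : ℝ, ∀ z : ℂ, 0 < z.re → ‖F z‖ ≤ M)
    (hcont : ContinuousOn F {z : ℂ | 0 ≤ z.re})
    (z₀ : ℂ) (hz₀ : 0 < z₀.re) (hzero : ∀ n : ℕ, F (z₀ + n) = 0)
    (hdecay : ∀ δ : ℝ, 0 < δ → ∃ C : ℝ, 0 < C ∧ ∀ z : ℂ, 0 < z.re →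
      ‖Complex.Gamma (-z) * F z‖ ≤ C * Real.exp ((δ - Real.pi / 2) * |z.im|)) :
    ∀ z : ℂ, 0 < z.re → F z = 0 :=
  uniqueness_from_vanishing_on_naturals_general F hdiff hbdd hcont z₀ hz₀ hzero
end

section
/- Let $\phi : \mathcal{G} \to \mathcal{G}$ be holomorphic on a domain $\mathcal{G} \subseteq \mathbb{C}$ with fixed point $\xi_0$, $\phi(\xi_0) = \xi_0$, and multiplier $\lambda = \phi'(\xi_0)$ with $0 < \lambda < 1$. Then there exists a holomorphic function $\Psi$ on a neighborhood $\mathcal{U}$ of $\xi_0$ with $\Psi(\xi_0) = 0$, $\Psi'(\xi_0) = 1$, and $\Psi(\phi(\xi)) = \lambda \Psi(\xi)$ for all $\xi \in \mathcal{U}$ with $\phi(\xi) \in \mathcal{U}$. -/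
/-!
Near the fixed point, `‖φ ξ - ξ₀ - μ (ξ - ξ₀)‖ ≤ M ‖ξ - ξ₀‖²`, so on a closed ball of radius `r`
the map `φ` contracts towards `ξ₀` by the factor `ρ = ‖μ‖ + M r`, and `ρ² < ‖μ‖` for small `r`
because `‖μ‖² < ‖μ‖`. The increments of `Ψₙ ξ = (φⁿ ξ - ξ₀) / μⁿ` are the quadratic remainders at
`φⁿ ξ` divided by `μⁿ⁺¹`, hence of size `O((ρ² / ‖μ‖)ⁿ)` uniformly on the ball. So `Ψₙ` converges
uniformly to a holomorphic `Ψ`, whose derivative at `ξ₀` is the common value `1` of the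
derivatives of the `Ψₙ`, and the identity `Ψₙ (φ ξ) = μ Ψₙ₊₁ ξ` passes to the limit.
-/

open Asymptotics Filter Function Metric Set Topology

theorem AnalyticAt.isBigO_sub_sub_smul_sq {𝕜 E : Type*} [NontriviallyNormedField 𝕜]
    [NormedAddCommGroup E] [NormedSpace 𝕜 E] {f : 𝕜 → E} {x : 𝕜} {f' : E}
    (hf : AnalyticAt 𝕜 f x) (hd : HasDerivAt f f' x) :
    (fun y => f y - f x - (y - x) • f') =O[𝓝 x] fun y => (y - x) ^ 2 := by
  set g : 𝕜 → E := fun y => f y - f x - (y - x) • f'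
  have hg : AnalyticAt 𝕜 g x :=
    (hf.sub analyticAt_const).sub ((analyticAt_id.sub analyticAt_const).smul analyticAt_const)
  have hgd : HasDerivAt g 0 x := by
    have h := (hd.sub_const (f x)).sub (((hasDerivAt_id x).sub_const x).smul_const f')
    rwa [one_smul, sub_self] at h
  obtain ⟨p, hp⟩ := hg
  have hslope : DifferentiableAt 𝕜 (dslope g x) x :=
    AnalyticAt.differentiableAt ⟨_, hp.has_fpower_series_dslope_fslope⟩
  have hslope_x : dslope g x x = 0 := by rw [dslope_same, hgd.deriv]
  calc g = fun y => (y - x) • dslope g x y := by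
        funext y; rw [sub_smul_dslope_of_zero (by simp [g])]
    _ =O[𝓝 x] fun y => (y - x) • (y - x) := by
        refine (isBigO_refl _ _).smul ?_
        simpa [← dslope_same, hslope_x] using hslope.isBigO_sub
    _ = fun y => (y - x) ^ 2 := by funext y; rw [smul_eq_mul, sq]

theorem dist_iterate_le_of_mapsTo {X : Type*} [PseudoMetricSpace X] {f : X → X} {s : Set X}
    {x₀ : X} {ρ : ℝ} (hρ : 0 ≤ ρ) (hs : MapsTo f s s)
    (hf : ∀ x ∈ s, dist (f x) x₀ ≤ ρ * dist x x₀) {x : X} (hx : x ∈ s) (n : ℕ) :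
    dist (f^[n] x) x₀ ≤ ρ ^ n * dist x x₀ := by
  induction n with
  | zero => simp
  | succ n ih =>
    calc dist (f^[n + 1] x) x₀ ≤ ρ * dist (f^[n] x) x₀ := by
          rw [iterate_succ_apply']; exact hf _ (hs.iterate n hx)
      _ ≤ ρ * (ρ ^ n * dist x x₀) := by gcongr
      _ = ρ ^ (n + 1) * dist x x₀ := by ring

theorem mapsTo_closedBall_of_dist_le_mul {X : Type*} [PseudoMetricSpace X] {f : X → X}
    {x₀ : X} {r ρ : ℝ} (hρ : ρ ≤ 1)
    (hf : ∀ x ∈ closedBall x₀ r, dist (f x) x₀ ≤ ρ * dist x x₀) :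
    MapsTo f (closedBall x₀ r) (closedBall x₀ r) := fun x hx =>
  calc dist (f x) x₀ ≤ ρ * dist x x₀ := hf x hx
    _ ≤ dist x x₀ := mul_le_of_le_one_left dist_nonneg hρ
    _ ≤ r := hx

theorem TendstoLocallyUniformlyOn.hasDerivAt_of_tendsto {ι E : Type*} [NormedAddCommGroup E]
    [NormedSpace ℂ E] [CompleteSpace E] {l : Filter ι} [l.NeBot] {F : ι → ℂ → E} {f : ℂ → E}
    {F' : ι → E} {U : Set ℂ} {x : ℂ} {a : E} (hF : TendstoLocallyUniformlyOn F f l U)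
    (hFd : ∀ᶠ n in l, DifferentiableOn ℂ (F n) U) (hU : IsOpen U) (hx : x ∈ U)
    (hF' : ∀ n, HasDerivAt (F n) (F' n) x) (ha : Tendsto F' l (𝓝 a)) : HasDerivAt f a x := by
  have hderiv : Tendsto (fun n => _root_.deriv (F n) x) l (𝓝 (_root_.deriv f x)) :=
    (hF.deriv hFd hU).tendsto_at hx
  have hfa : _root_.deriv f x = a := by
    simp only [fun n => (hF' n).deriv] at hderiv
    exact tendsto_nhds_unique hderiv ha
  rw [← hfa]
  exact ((hF.differentiableOn hFd hU).differentiableAt (hU.mem_nhds hx)).hasDerivAt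

theorem exists_tendstoUniformlyOn_of_norm_sub_le {α E : Type*} [NormedAddCommGroup E]
    [CompleteSpace E] {F : ℕ → α → E} {s : Set α} {u : ℕ → ℝ} (hu : Summable u)
    (hF : ∀ n, ∀ x ∈ s, ‖F (n + 1) x - F n x‖ ≤ u n) :
    ∃ f : α → E, TendstoUniformlyOn F f atTop s := by
  refine ⟨fun x => F 0 x + ∑' n, (F (n + 1) x - F n x), ?_⟩
  have hsum := tendstoUniformlyOn_tsum_nat hu hF
  rw [Metric.tendstoUniformlyOn_iff] at hsum ⊢
  intro ε hε
  filter_upwards [hsum ε hε] with n hn x hx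
  have htele : F n x = F 0 x + ∑ k ∈ Finset.range n, (F (k + 1) x - F k x) := by
    rw [Finset.sum_range_sub (fun k => F k x)]; abel
  rw [htele, dist_add_left]
  exact hn x hx

section

variable {𝕜 : Type*} [NontriviallyNormedField 𝕜] {φ : 𝕜 → 𝕜} {ξ₀ μ ξ : 𝕜} {M r : ℝ}

def koenigsSeq (φ : 𝕜 → 𝕜) (ξ₀ μ : 𝕜) (n : ℕ) (ξ : 𝕜) : 𝕜 :=
  (φ^[n] ξ - ξ₀) / μ ^ n

theorem koenigsSeq_succ_sub (hμ : μ ≠ 0) (n : ℕ) (ξ : 𝕜) :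
    koenigsSeq φ ξ₀ μ (n + 1) ξ - koenigsSeq φ ξ₀ μ n ξ =
      (φ (φ^[n] ξ) - ξ₀ - μ * (φ^[n] ξ - ξ₀)) / μ ^ (n + 1) := by
  simp only [koenigsSeq, iterate_succ_apply']
  field_simp
  ring

theorem koenigsSeq_apply_map (hμ : μ ≠ 0) (n : ℕ) (ξ : 𝕜) :
    koenigsSeq φ ξ₀ μ n (φ ξ) = μ * koenigsSeq φ ξ₀ μ (n + 1) ξ := by
  simp only [koenigsSeq, ← iterate_succ_apply, pow_succ]
  field_simp

theorem koenigsSeq_self (hfix : φ ξ₀ = ξ₀) (n : ℕ) : koenigsSeq φ ξ₀ μ n ξ₀ = 0 := by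
  simp [koenigsSeq, iterate_fixed hfix]

theorem hasDerivAt_koenigsSeq (hμ : μ ≠ 0) (hfix : φ ξ₀ = ξ₀) (hder : HasDerivAt φ μ ξ₀) (n : ℕ) :
    HasDerivAt (koenigsSeq φ ξ₀ μ n) 1 ξ₀ := by
  have h := ((HasDerivAt.iterate ξ₀ hder hfix n).sub_const ξ₀).div_const (μ ^ n)
  rwa [div_self (pow_ne_zero n hμ)] at h

theorem dist_le_of_norm_sub_sub_le_sq (hM : 0 ≤ M)
    (hquad : ∀ ξ ∈ closedBall ξ₀ r, ‖φ ξ - ξ₀ - μ * (ξ - ξ₀)‖ ≤ M * ‖ξ - ξ₀‖ ^ 2)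
    (hξ : ξ ∈ closedBall ξ₀ r) : dist (φ ξ) ξ₀ ≤ (‖μ‖ + M * r) * dist ξ ξ₀ := by
  have hd : ‖ξ - ξ₀‖ ≤ r := mem_closedBall_iff_norm.mp hξ
  rw [dist_eq_norm, dist_eq_norm]
  calc ‖φ ξ - ξ₀‖ ≤ ‖φ ξ - ξ₀ - μ * (ξ - ξ₀)‖ + ‖μ * (ξ - ξ₀)‖ := norm_le_norm_sub_add _ _
    _ ≤ M * ‖ξ - ξ₀‖ ^ 2 + ‖μ‖ * ‖ξ - ξ₀‖ := by rw [norm_mul]; gcongr; exact hquad ξ hξ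
    _ ≤ (‖μ‖ + M * r) * ‖ξ - ξ₀‖ := by
        nlinarith [mul_le_mul_of_nonneg_left hd (mul_nonneg hM (norm_nonneg (ξ - ξ₀)))]

theorem mapsTo_closedBall_of_norm_sub_sub_le_sq (hM : 0 ≤ M)
    (hquad : ∀ ξ ∈ closedBall ξ₀ r, ‖φ ξ - ξ₀ - μ * (ξ - ξ₀)‖ ≤ M * ‖ξ - ξ₀‖ ^ 2)
    (hρ : (‖μ‖ + M * r) ^ 2 < ‖μ‖) : MapsTo φ (closedBall ξ₀ r) (closedBall ξ₀ r) := by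
  intro ξ hξ
  have hr : 0 ≤ r := nonempty_closedBall.mp ⟨ξ, hξ⟩
  have hρ₁ : ‖μ‖ + M * r ≤ 1 := by nlinarith [mul_nonneg hM hr]
  exact mapsTo_closedBall_of_dist_le_mul hρ₁
    (fun ζ hζ => dist_le_of_norm_sub_sub_le_sq hM hquad hζ) hξ

theorem norm_koenigsSeq_succ_sub_le (hM : 0 ≤ M)
    (hquad : ∀ ξ ∈ closedBall ξ₀ r, ‖φ ξ - ξ₀ - μ * (ξ - ξ₀)‖ ≤ M * ‖ξ - ξ₀‖ ^ 2)
    (hρ : (‖μ‖ + M * r) ^ 2 < ‖μ‖) (hξ : ξ ∈ closedBall ξ₀ r) (n : ℕ) :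
    ‖koenigsSeq φ ξ₀ μ (n + 1) ξ - koenigsSeq φ ξ₀ μ n ξ‖ ≤
      M * r ^ 2 / ‖μ‖ * ((‖μ‖ + M * r) ^ 2 / ‖μ‖) ^ n := by
  set ρ := ‖μ‖ + M * r
  have hr : 0 ≤ r := nonempty_closedBall.mp ⟨ξ, hξ⟩
  have hμ : 0 < ‖μ‖ := (sq_nonneg ρ).trans_lt hρ
  have hmaps := mapsTo_closedBall_of_norm_sub_sub_le_sq hM hquad hρ
  have horbit : ‖φ^[n] ξ - ξ₀‖ ≤ ρ ^ n * r := by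
    rw [← dist_eq_norm]
    have hcontr : ∀ ζ ∈ closedBall ξ₀ r, dist (φ ζ) ξ₀ ≤ ρ * dist ζ ξ₀ :=
      fun ζ hζ => dist_le_of_norm_sub_sub_le_sq hM hquad hζ
    exact (dist_iterate_le_of_mapsTo (by positivity) hmaps hcontr hξ n).trans
      (by gcongr; exact hξ)
  rw [koenigsSeq_succ_sub (norm_pos_iff.mp hμ), norm_div, norm_pow]
  calc ‖φ (φ^[n] ξ) - ξ₀ - μ * (φ^[n] ξ - ξ₀)‖ / ‖μ‖ ^ (n + 1)
      ≤ M * (ρ ^ n * r) ^ 2 / ‖μ‖ ^ (n + 1) := by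
        gcongr
        exact (hquad _ (hmaps.iterate n hξ)).trans (by gcongr)
    _ = M * r ^ 2 / ‖μ‖ * (ρ ^ 2 / ‖μ‖) ^ n := by
        rw [div_pow, mul_pow, ← pow_mul, ← pow_mul, pow_succ]
        field_simp
        ring

theorem exists_tendstoUniformlyOn_koenigsSeq [CompleteSpace 𝕜] (hM : 0 ≤ M)
    (hquad : ∀ ξ ∈ closedBall ξ₀ r, ‖φ ξ - ξ₀ - μ * (ξ - ξ₀)‖ ≤ M * ‖ξ - ξ₀‖ ^ 2)
    (hρ : (‖μ‖ + M * r) ^ 2 < ‖μ‖) :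
    ∃ Ψ : 𝕜 → 𝕜, TendstoUniformlyOn (koenigsSeq φ ξ₀ μ) Ψ atTop (closedBall ξ₀ r) := by
  have hμ : 0 < ‖μ‖ := (sq_nonneg _).trans_lt hρ
  have hratio : (‖μ‖ + M * r) ^ 2 / ‖μ‖ < 1 := (div_lt_one hμ).mpr hρ
  exact exists_tendstoUniformlyOn_of_norm_sub_le
    ((summable_geometric_of_lt_one (by positivity) hratio).mul_left _)
    fun n ξ hξ => norm_koenigsSeq_succ_sub_le hM hquad hρ hξ n

end

theorem exists_linearization_on_ball {φ : ℂ → ℂ} {ξ₀ μ : ℂ} {M r : ℝ}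
    (hφ : DifferentiableOn ℂ φ (closedBall ξ₀ r)) (hder : HasDerivAt φ μ ξ₀) (hr : 0 < r)
    (hM : 0 ≤ M) (hquad : ∀ ξ ∈ closedBall ξ₀ r, ‖φ ξ - ξ₀ - μ * (ξ - ξ₀)‖ ≤ M * ‖ξ - ξ₀‖ ^ 2)
    (hρ : (‖μ‖ + M * r) ^ 2 < ‖μ‖) :
    ∃ Ψ : ℂ → ℂ, DifferentiableOn ℂ Ψ (ball ξ₀ r) ∧ Ψ ξ₀ = 0 ∧ HasDerivAt Ψ 1 ξ₀ ∧
      ∀ ξ ∈ closedBall ξ₀ r, Ψ (φ ξ) = μ * Ψ ξ := by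
  have hμ : μ ≠ 0 := norm_pos_iff.mp ((sq_nonneg _).trans_lt hρ)
  have hfix : φ ξ₀ = ξ₀ := by
    simpa [sub_eq_zero] using hquad ξ₀ (mem_closedBall_self hr.le)
  have hmaps := mapsTo_closedBall_of_norm_sub_sub_le_sq hM hquad hρ
  obtain ⟨Ψ, hΨ⟩ := exists_tendstoUniformlyOn_koenigsSeq hM hquad hρ
  have hlim : ∀ ξ ∈ closedBall ξ₀ r,
      Tendsto (fun n => koenigsSeq φ ξ₀ μ n ξ) atTop (𝓝 (Ψ ξ)) :=
    fun ξ hξ => hΨ.tendsto_at hξ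
  have hloc : TendstoLocallyUniformlyOn (koenigsSeq φ ξ₀ μ) Ψ atTop (ball ξ₀ r) :=
    (hΨ.mono ball_subset_closedBall).tendstoLocallyUniformlyOn
  have hdiff : ∀ᶠ n in atTop, DifferentiableOn ℂ (koenigsSeq φ ξ₀ μ n) (ball ξ₀ r) :=
    Eventually.of_forall fun n =>
      (((hφ.iterate hmaps n).sub_const ξ₀).div_const _).mono ball_subset_closedBall
  refine ⟨Ψ, hloc.differentiableOn hdiff isOpen_ball, ?_,
    hloc.hasDerivAt_of_tendsto hdiff isOpen_ball (mem_ball_self hr)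
      (hasDerivAt_koenigsSeq hμ hfix hder) tendsto_const_nhds, fun ξ hξ => ?_⟩
  · refine tendsto_nhds_unique (hlim ξ₀ (mem_closedBall_self hr.le)) ?_
    simp only [koenigsSeq_self hfix, tendsto_const_nhds]
  · refine tendsto_nhds_unique (hlim _ (hmaps hξ)) ?_
    simp only [koenigsSeq_apply_map hμ]
    exact ((hlim ξ hξ).comp (tendsto_add_atTop_nat 1)).const_mul μ

theorem koenigs_linearization_general (G : Set ℂ) (hG : IsOpen G) (φ : ℂ → ℂ)
    (hφ : DifferentiableOn ℂ φ G)
    (ξ₀ : ℂ) (hξ₀ : ξ₀ ∈ G) (hfix : φ ξ₀ = ξ₀)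
    (l : ℝ) (hl : 0 < l) (hl' : l < 1) (hder : HasDerivAt φ (l : ℂ) ξ₀) :
    ∃ U ∈ nhds ξ₀, ∃ Ψ : ℂ → ℂ, DifferentiableOn ℂ Ψ U ∧ Ψ ξ₀ = 0 ∧
      HasDerivAt Ψ 1 ξ₀ ∧ ∀ ξ ∈ U, φ ξ ∈ U → Ψ (φ ξ) = (l : ℂ) * Ψ ξ := by
  obtain ⟨M, hM, hMO⟩ :=
    ((hφ.analyticAt (hG.mem_nhds hξ₀)).isBigO_sub_sub_smul_sq hder).exists_pos
  have hquad : ∀ᶠ ξ in 𝓝 ξ₀, ‖φ ξ - ξ₀ - l * (ξ - ξ₀)‖ ≤ M * ‖ξ - ξ₀‖ ^ 2 := by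
    filter_upwards [hMO.bound] with ξ hξ
    simpa [hfix, mul_comm] using hξ
  have hρ : ∀ᶠ r in 𝓝 0, (‖(l : ℂ)‖ + M * r) ^ 2 < ‖(l : ℂ)‖ := by
    refine ContinuousAt.eventually_lt (by fun_prop) continuousAt_const ?_
    rw [Complex.norm_real, Real.norm_of_nonneg hl.le]
    nlinarith
  obtain ⟨r, ⟨hrρ, hrG⟩, hr⟩ := ((hρ.and (eventually_closedBall_subset
    (inter_mem (hG.mem_nhds hξ₀) hquad))).filter_mono nhdsWithin_le_nhds).and
      (self_mem_nhdsWithin (s := Ioi 0)) |>.exists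
  obtain ⟨Ψ, hΨd, hΨ₀, hΨ', hΨφ⟩ := exists_linearization_on_ball
    (hφ.mono fun ξ hξ => (hrG hξ).1) hder hr hM.le (fun ξ hξ => (hrG hξ).2) hrρ
  exact ⟨ball ξ₀ r, ball_mem_nhds ξ₀ hr, Ψ, hΨd, hΨ₀, hΨ', fun ξ hξ _ =>
    hΨφ ξ (ball_subset_closedBall hξ)⟩

theorem koenigs_linearization (G : Set ℂ) (hG : IsOpen G) (φ : ℂ → ℂ)
    (hφ : DifferentiableOn ℂ φ G) (hmaps : Set.MapsTo φ G G)
    (ξ₀ : ℂ) (hξ₀ : ξ₀ ∈ G) (hfix : φ ξ₀ = ξ₀)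
    (l : ℝ) (hl : 0 < l) (hl' : l < 1) (hder : HasDerivAt φ (l : ℂ) ξ₀) :
    ∃ U ∈ nhds ξ₀, ∃ Ψ : ℂ → ℂ, DifferentiableOn ℂ Ψ U ∧ Ψ ξ₀ = 0 ∧
      HasDerivAt Ψ 1 ξ₀ ∧ ∀ ξ ∈ U, φ ξ ∈ U → Ψ (φ ξ) = (l : ℂ) * Ψ ξ :=
  koenigs_linearization_general G hG φ hφ ξ₀ hξ₀ hfix l hl hl' hder
end
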